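/- arXiv:math/0209364 — 6 statements merged into one kernel-verified Lean document; each statement's English description precedes it below -/
import Mathlib

section
/- If χ is a chirotope of rank r over E and |E| > r, then there exists an element i ∈ E such that the restriction of χ to oriented (r-1)-simplices avoiding i is again a chirotope of rank r over E \ {i}. -/
/-- The bar involution on signed indices: `(e, b) ↦ (e, ¬b)`. -/
def bar {α : Type*} (x : α × Bool) : α × Bool := (x.1, !x.2)

/-- A chirotope of rank `r` over `α`: a map from `r`-tuples of signed indices
(oriented `(r-1)`-simplices) to `{-1,0,+1}` satisfying axioms (C1)–(C4). -/
structure IsChirotope (r : ℕ) (α : Type*) (χ : (Fin r → α × Bool) → ℤ) : Prop where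
  rpos : 0 < r
  values : ∀ σ : Fin r → α × Bool, χ σ = -1 ∨ χ σ = 0 ∨ χ σ = 1
  degenerate : ∀ σ : Fin r → α × Bool,
      ¬ Function.Injective (fun i => (σ i).1) → χ σ = 0
  c1 : ∀ e : α, ∃ τ : Fin r → α, (∃ i, τ i = e) ∧ χ (fun i => (τ i, true)) ≠ 0
  c2neg : ∀ (σ : Fin r → α × Bool) (i : Fin r), i.val = r - 1 →
      χ (Function.update σ i (bar (σ i))) = - χ σ
  c2swap : ∀ (σ : Fin r → α × Bool) (i j : Fin r), j.val = i.val + 1 →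
      χ (fun m => if m = i then bar (σ j) else if m = j then σ i else σ m) = χ σ
  c3 : ∀ σ τ : Fin r → α × Bool, χ σ ≠ 0 → χ τ ≠ 0 →
      ∃ i, χ (Function.update σ ⟨r - 1, Nat.sub_lt rpos one_pos⟩ (τ i)) ≠ 0
  c4 : ∀ (σ : Fin r → α × Bool) (y₁ y₂ : α × Bool),
      0 ≤ χ (Function.update σ ⟨r - 2, Nat.sub_lt rpos two_pos⟩ y₁) *
          χ (Function.update σ ⟨r - 1, Nat.sub_lt rpos one_pos⟩ y₂) →
      0 ≤ χ (Function.update σ ⟨r - 2, Nat.sub_lt rpos two_pos⟩ y₂) *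
          χ (Function.update σ ⟨r - 1, Nat.sub_lt rpos one_pos⟩ (bar y₁)) →
      0 ≤ χ σ *
          χ (Function.update (Function.update σ ⟨r - 2, Nat.sub_lt rpos two_pos⟩ y₁)
              ⟨r - 1, Nat.sub_lt rpos one_pos⟩ y₂)

namespace ChirotopeAux

variable {α : Type*} {r : ℕ} {χ : (Fin r → α × Bool) → ℤ}

/-- Flipping the sign of any entry changes `χ` by at most a sign. -/
lemma chi_flip (h : IsChirotope r α χ) :
    ∀ (n : ℕ) (σ : Fin r → α × Bool) (p : Fin r), r - 1 - p.val = n →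
      χ (Function.update σ p (bar (σ p))) = χ σ ∨
      χ (Function.update σ p (bar (σ p))) = - χ σ := by
  intro n
  induction n with
  | zero =>
      intro σ p hp
      have hpv : p.val = r - 1 := by have := p.isLt; omega
      exact Or.inr (h.c2neg σ p hpv)
  | succ n ih =>
      intro σ p hp
      have hlt : p.val + 1 < r := by have := p.isLt; omega
      set j : Fin r := ⟨p.val + 1, hlt⟩ with hj
      have hjp : j ≠ p := by
        intro e
        have : j.val = p.val := congrArg Fin.val e
        simp [hj] at this
      have hpj : p ≠ j := fun e => hjp e.symm
      set m0 : Fin r → α × Bool :=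
        fun t => if t = p then bar (σ j) else if t = j then σ p else σ t with hm0
      have hswap : χ m0 = χ σ := h.c2swap σ p j rfl
      have hmj : m0 j = σ p := by simp [hm0, hjp]
      set σ' : Fin r → α × Bool := Function.update σ p (bar (σ p)) with hσ'
      have hσ'p : σ' p = bar (σ p) := by simp [hσ']
      have hσ'j : σ' j = σ j := by simp [hσ', Function.update_apply, hjp]
      have key : Function.update m0 j (bar (m0 j)) =
          fun t => if t = p then bar (σ' j) else if t = j then σ' p else σ' t := by
        funext t
        by_cases htj : t = j
        · subst htj
          rw [Function.update_self, hmj]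
          simp [hjp, hσ'p]
        · rw [Function.update_apply, if_neg htj]
          by_cases htp : t = p
          · subst htp
            simp [hm0, hσ'j]
          · simp [hm0, htp, htj, hσ', Function.update_apply]
      have hswap' : χ (Function.update m0 j (bar (m0 j))) = χ σ' := by
        rw [key]; exact h.c2swap σ' p j rfl
      have hjn : r - 1 - j.val = n := by simp [hj]; omega
      have := ih m0 j hjn
      rw [hswap', hswap] at this
      exact this

/-- Any entry can be moved to the last position without destroying nonvanishing. -/
lemma chi_move (h : IsChirotope r α χ) :
    ∀ (n : ℕ) (σ : Fin r → α × Bool) (p : Fin r), r - 1 - p.val = n → χ σ ≠ 0 →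
      ∃ σ' : Fin r → α × Bool, χ σ' ≠ 0 ∧
        (σ' ⟨r - 1, Nat.sub_lt h.rpos one_pos⟩).1 = (σ p).1 ∧
        (Set.range fun t => (σ' t).1) = Set.range fun t => (σ t).1 := by
  intro n
  induction n with
  | zero =>
      intro σ p hp hσ
      have hpv : p = ⟨r - 1, Nat.sub_lt h.rpos one_pos⟩ := by
        have := p.isLt; apply Fin.ext; simp; omega
      exact ⟨σ, hσ, by rw [hpv], rfl⟩
  | succ n ih =>
      intro σ p hp hσ
      have hlt : p.val + 1 < r := by have := p.isLt; omega
      set j : Fin r := ⟨p.val + 1, hlt⟩ with hj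
      have hjp : j ≠ p := by
        intro e
        have : j.val = p.val := congrArg Fin.val e
        simp [hj] at this
      set m0 : Fin r → α × Bool :=
        fun t => if t = p then bar (σ j) else if t = j then σ p else σ t with hm0
      have hswap : χ m0 = χ σ := h.c2swap σ p j rfl
      have hpj : p ≠ j := by
        intro e
        have : p.val = j.val := congrArg Fin.val e
        simp [hj] at this
      have hm0p : (m0 p).1 = (σ j).1 := by simp [hm0, bar]
      have hm0j : (m0 j).1 = (σ p).1 := by simp [hm0, hjp]
      have hm0t : ∀ t, t ≠ p → t ≠ j → (m0 t).1 = (σ t).1 := by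
        intro t htp htj
        simp [hm0, htp, htj]
      have hrange : (Set.range fun t => (m0 t).1) = Set.range fun t => (σ t).1 := by
        ext a
        constructor
        · rintro ⟨t, ht⟩
          simp only at ht
          by_cases htp : t = p
          · subst htp; exact ⟨j, by show (σ j).1 = a; rw [← hm0p]; exact ht⟩
          · by_cases htj : t = j
            · subst htj; exact ⟨p, by show (σ p).1 = a; rw [← hm0j]; exact ht⟩
            · exact ⟨t, by show (σ t).1 = a; rw [← hm0t t htp htj]; exact ht⟩
        · rintro ⟨t, ht⟩
          simp only at ht
          by_cases htp : t = p
          · subst htp; exact ⟨j, by show (m0 j).1 = a; rw [hm0j]; exact ht⟩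
          · by_cases htj : t = j
            · subst htj; exact ⟨p, by show (m0 p).1 = a; rw [hm0p]; exact ht⟩
            · exact ⟨t, by show (m0 t).1 = a; rw [hm0t t htp htj]; exact ht⟩
      have hjn : r - 1 - j.val = n := by simp [hj]; omega
      obtain ⟨σ', h1, h2, h3⟩ := ih m0 j hjn (by rw [hswap]; exact hσ)
      exact ⟨σ', h1, by rw [h2, hm0j], by rw [h3, hrange]⟩

/-- All booleans can be set to `true` without destroying nonvanishing. -/
lemma chi_true (h : IsChirotope r α χ) :
    ∀ (n : ℕ) (σ : Fin r → α × Bool),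
      (Finset.univ.filter fun t => (σ t).2 = false).card = n → χ σ ≠ 0 →
      χ (fun t => ((σ t).1, true)) ≠ 0 := by
  intro n
  induction n with
  | zero =>
      intro σ hc hσ
      have : (fun t => ((σ t).1, true)) = σ := by
        funext t
        have ht : (σ t).2 = true := by
          by_contra hb
          have : t ∈ Finset.univ.filter fun t => (σ t).2 = false := by
            simp [Bool.not_eq_true] at hb ⊢; exact hb
          rw [Finset.card_eq_zero] at hc
          simp [hc] at this
        exact Prod.ext rfl ht.symm
      rw [this]; exact hσ
  | succ n ih =>
      intro σ hc hσ
      have hne : (Finset.univ.filter fun t => (σ t).2 = false).Nonempty := by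
        rw [← Finset.card_pos, hc]; omega
      obtain ⟨p, hp⟩ := hne
      have hpb : (σ p).2 = false := by simpa using hp
      set σ' := Function.update σ p (bar (σ p)) with hσ'
      have h1 : χ σ' ≠ 0 := by
        rcases chi_flip h (r - 1 - p.val) σ p rfl with e | e <;> rw [hσ', e] <;>
          simpa using hσ
      have hfst : ∀ t, (σ' t).1 = (σ t).1 := by
        intro t
        by_cases htp : t = p
        · subst htp; simp [hσ', bar]
        · simp [hσ', Function.update_apply, htp]
      have hfilter : (Finset.univ.filter fun t => (σ' t).2 = false) =
          (Finset.univ.filter fun t => (σ t).2 = false).erase p := by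
        ext t
        by_cases htp : t = p
        · subst htp; simp [hσ', bar, hpb]
        · simp [hσ', Function.update_apply, htp]
      have hc' : (Finset.univ.filter fun t => (σ' t).2 = false).card = n := by
        rw [hfilter, Finset.card_erase_of_mem hp, hc]
        omega
      have := ih σ' hc' h1
      have heq : (fun t => ((σ' t).1, true)) = fun t => ((σ t).1, true) := by
        funext t; rw [hfst]
      rwa [heq] at this

/-- Nonvanishing simplices have injective underlying elements. -/
lemma chi_inj (h : IsChirotope r α χ) (σ : Fin r → α × Bool) (hσ : χ σ ≠ 0) :
    Function.Injective fun t => (σ t).1 := by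
  by_contra hn
  exact hσ (h.degenerate σ hn)

end ChirotopeAux

open ChirotopeAux in
/-- If `χ` is a chirotope of rank `r` over `E` and `|E| > r`, then some
element `i ∈ E` can be deleted: the restriction of `χ` to oriented simplices avoiding
`i` is again a chirotope of rank `r` over `E \ {i}`. -/
theorem chirotope_deletion {α : Type*} [Fintype α] (r : ℕ)
    (χ : (Fin r → α × Bool) → ℤ) (h : IsChirotope r α χ)
    (hcard : r < Fintype.card α) :
    ∃ i : α, IsChirotope r {e : α // e ≠ i}
      (fun σ : Fin r → {e : α // e ≠ i} × Bool =>
        χ (fun j => ((σ j).1.1, (σ j).2))) := by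
  classical
  -- find a nonvanishing basis
  have hne : Nonempty α := by
    rw [← Fintype.card_pos_iff]; omega
  obtain ⟨a₀⟩ := hne
  obtain ⟨τ₀, -, hτ₀⟩ := h.c1 a₀
  have hτ₀inj : Function.Injective τ₀ := by
    have := chi_inj h (fun t => (τ₀ t, true)) hτ₀
    exact this
  -- find i outside its image
  have : ∃ i : α, i ∉ Finset.univ.image τ₀ := by
    by_contra hcon
    push_neg at hcon
    have : (Finset.univ : Finset α) ⊆ Finset.univ.image τ₀ :=
      fun x _ => hcon x
    have hle := Finset.card_le_card this
    rw [Finset.card_image_of_injective _ hτ₀inj] at hle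
    simp [Finset.card_univ] at hle
    omega
  obtain ⟨i, hi⟩ := this
  have hiτ₀ : ∀ t, τ₀ t ≠ i := by
    intro t ht
    exact hi (Finset.mem_image.2 ⟨t, Finset.mem_univ t, ht⟩)
  refine ⟨i, ?_⟩
  have emb_update : ∀ (σ : Fin r → {e : α // e ≠ i} × Bool) (p : Fin r)
      (x : {e : α // e ≠ i} × Bool),
      (fun j => (((Function.update σ p x) j).1.1, ((Function.update σ p x) j).2)) =
      Function.update (fun j => ((σ j).1.1, (σ j).2)) p (x.1.1, x.2) := by
    intro σ p x
    funext t
    by_cases htp : t = p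
    · subst htp; simp
    · simp [Function.update_apply, htp]
  refine
    { rpos := h.rpos
      values := fun σ => h.values _
      degenerate := ?_
      c1 := ?_
      c2neg := ?_
      c2swap := ?_
      c3 := ?_
      c4 := ?_ }
  · -- degenerate
    intro σ hninj
    apply h.degenerate
    intro hinj
    apply hninj
    intro a b hab
    apply hinj
    simp only
    exact congrArg Subtype.val hab
  · -- c1
    intro e
    obtain ⟨τ, ⟨p, hpe⟩, hτ⟩ := h.c1 e.1
    by_cases hcase : ∃ q, τ q = i
    · obtain ⟨q, hq⟩ := hcase
      set σ : Fin r → α × Bool := fun t => (τ t, true) with hσdef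
      obtain ⟨σ', h1, h2, h3⟩ := chi_move h (r - 1 - q.val) σ q rfl hτ
      set last : Fin r := ⟨r - 1, Nat.sub_lt h.rpos one_pos⟩ with hlast
      obtain ⟨k, hk⟩ := h.c3 σ' (fun t => (τ₀ t, true)) h1 hτ₀
      set ρ : Fin r → α × Bool := Function.update σ' last (τ₀ k, true) with hρ
      have hσ'inj := chi_inj h σ' h1
      have hσ'last : (σ' last).1 = i := by
        rw [h2]; exact hq
      have hne2 : ∀ t, (ρ t).1 ≠ i := by
        intro t
        by_cases htl : t = last
        · subst htl; simp [hρ]; exact hiτ₀ k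
        · simp [hρ, Function.update_apply, htl]
          intro hti
          exact htl (hσ'inj (show (σ' t).1 = (σ' last).1 by rw [hσ'last, hti]))
      have hmem : ∃ m, (ρ m).1 = e.1 := by
        have : e.1 ∈ Set.range fun t => (σ' t).1 := by
          rw [h3]; exact ⟨p, hpe⟩
        obtain ⟨m, hm0⟩ := this
        have hm : (σ' m).1 = e.1 := hm0
        have hml : m ≠ last := by
          intro hl
          apply e.2
          rw [← hm, hl]
          exact hσ'last
        refine ⟨m, ?_⟩
        simp only [hρ, Function.update_apply, if_neg hml]
        exact hm
      have hρne : χ ρ ≠ 0 := hk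
      have htrue := chi_true h _ ρ rfl hρne
      refine ⟨fun t => ⟨(ρ t).1, hne2 t⟩, ?_, ?_⟩
      · obtain ⟨m, hm⟩ := hmem
        exact ⟨m, Subtype.ext hm⟩
      · exact htrue
    · push_neg at hcase
      refine ⟨fun t => ⟨τ t, hcase t⟩, ⟨p, Subtype.ext hpe⟩, ?_⟩
      exact hτ
  · -- c2neg
    intro σ p hp
    rw [emb_update]
    exact h.c2neg _ p hp
  · -- c2swap
    intro σ p j hpj
    have : (fun m => (((fun m => if m = p then bar (σ j) else if m = j then σ p else σ m) m).1.1,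
        ((fun m => if m = p then bar (σ j) else if m = j then σ p else σ m) m).2)) =
        fun m => if m = p then bar ((fun j => ((σ j).1.1, (σ j).2)) j)
          else if m = j then (fun j => ((σ j).1.1, (σ j).2)) p
          else (fun j => ((σ j).1.1, (σ j).2)) m := by
      funext t
      by_cases htp : t = p
      · subst htp; simp [bar]
      · by_cases htj : t = j
        · subst htj; simp [htp]
        · simp [htp, htj]
    rw [this]
    exact h.c2swap _ p j hpj
  · -- c3
    intro σ τ hσ hτ
    obtain ⟨k, hk⟩ := h.c3 _ (fun j => ((τ j).1.1, (τ j).2)) hσ hτ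
    refine ⟨k, ?_⟩
    rw [emb_update]
    exact hk
  · -- c4
    intro σ y₁ y₂ h1 h2
    rw [emb_update] at h1 h2 ⊢
    rw [emb_update] at h1 h2 ⊢
    have := h.c4 (fun j => ((σ j).1.1, (σ j).2)) (y₁.1.1, y₁.2) (y₂.1.1, y₂.2)
      (by exact h1) ?_
    · exact this
    · have hb : (bar y₁).1.1 = ((y₁.1.1, y₁.2) : α × Bool).1 := rfl
      simpa [bar] using h2
end

section
/- Let V = {v₁,...,v_n} be nonzero vectors spanning ℝ^r. Define χ on oriented (r-1)-simplices over {1,...,n} by χ([x₁,...,x_r]) = sign of det(φ(x₁),...,φ(x_r)), where φ(e) = v_e and φ(ē) = -v_e. Then χ satisfies the chirotope axioms (C1)-(C4). -/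
/-!
Write `M σ` for the matrix whose `j`-th column is `φ(σ j)`, so that `χ σ = sign (det (M σ))`.
Barring an entry negates a column and transposing two entries swaps two columns, which gives
(C2); a repeated underlying index makes two columns equal up to sign.

Cramer's rule `det A • b = ∑ₘ det A[m ↦ b] • Aₘ`, substituted into column `k` of a second matrix
`B`, gives the exchange identity `det A · det B[k ↦ b] = ∑ₘ det A[m ↦ b] · det B[k ↦ Aₘ]`.
With `A = M τ`, `B = M σ`, `b = Bₖ` it gives (C3). With `A = W` and `B = W[p ↦ c]` all but two
terms vanish, leaving the three-term Grassmann–Plücker relation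
`det W · det W[p ↦ c, q ↦ d] = det W[p ↦ c] · det W[q ↦ d] - det W[p ↦ d] · det W[q ↦ c]`,
whose right-hand side is a sum of two terms that the hypotheses of (C4) make nonnegative.
In rank one the two positions of (C4) coincide and `χ` never vanishes, so the hypotheses of (C4)
cannot hold. (C1) holds because a nonzero vector of a spanning family extends to a basis drawn
from the family.
-/

open Function Matrix

namespace Matrix

theorem updateCol_updateCol_col_eq_submatrix_swap {m n α : Type*} [DecidableEq n]
    (W : Matrix m n α) {p q : n} (hpq : p ≠ q) (c : m → α) :
    (W.updateCol p c).updateCol q (W.col p) = (W.updateCol q c).submatrix id (Equiv.swap p q) := by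
  ext i k
  rcases eq_or_ne k p with rfl | hkp
  · simp [hpq]
  rcases eq_or_ne k q with rfl | hkq
  · simp [hkp.symm]
  · simp [hkp, hkq, Equiv.swap_apply_of_ne_of_ne hkp hkq]

variable {n R : Type*} [Fintype n] [DecidableEq n] [CommRing R]

theorem det_smul_eq_sum_det_updateCol_smul_col (A : Matrix n n R) (b : n → R) :
    A.det • b = ∑ m, (A.updateCol m b).det • A.col m := by
  rw [← mulVec_cramer]
  ext i
  simp [mulVec, dotProduct, cramer_apply, mul_comm]

theorem det_updateCol_sum_smul {ι : Type*} (B : Matrix n n R) (k : n) (s : Finset ι)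
    (c : ι → R) (u : ι → n → R) :
    (B.updateCol k (∑ m ∈ s, c m • u m)).det = ∑ m ∈ s, c m * (B.updateCol k (u m)).det := by
  rw [← det_transpose, ← updateRow_transpose]
  simp_rw [← det_transpose (B.updateCol k _), ← updateRow_transpose]
  exact (detRowAlternating.map_update_sum s k _ _).trans
    (Finset.sum_congr rfl fun m _ => detRowAlternating.map_update_smul _ _ _ _)

theorem det_mul_det_updateCol (A B : Matrix n n R) (k : n) (b : n → R) :
    A.det * (B.updateCol k b).det =
      ∑ m, (A.updateCol m b).det * (B.updateCol k (A.col m)).det := by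
  rw [← det_updateCol_smul, det_smul_eq_sum_det_updateCol_smul_col, det_updateCol_sum_smul]

theorem det_mul_det_updateCol_updateCol (W : Matrix n n R) {p q : n} (hpq : p ≠ q)
    (c d : n → R) :
    W.det * ((W.updateCol p c).updateCol q d).det =
      (W.updateCol p c).det * (W.updateCol q d).det -
        (W.updateCol p d).det * (W.updateCol q c).det := by
  rw [det_mul_det_updateCol, Fintype.sum_eq_add p q hpq]
  · have hq : (W.updateCol p c).updateCol q (W.col q) = W.updateCol p c := by
      ext i k
      rcases eq_or_ne k q with rfl | hkq
      · simp [hpq.symm]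
      · simp [hkq]
    rw [updateCol_updateCol_col_eq_submatrix_swap W hpq, det_permute', Equiv.Perm.sign_swap hpq,
      hq]
    push_cast
    ring
  · rintro m ⟨hmp, hmq⟩
    refine mul_eq_zero_of_right _ (det_zero_of_column_eq hmq.symm fun i => ?_)
    simp [hmp, hmq]

end Matrix

theorem exists_linearIndependent_comp_of_span_eq_top {ι K V m : Type*} [Field K]
    [AddCommGroup V] [Module K V] [FiniteDimensional K V] [Fintype m] {v : ι → V}
    (hspan : Submodule.span K (Set.range v) = ⊤) {e : ι} (he : v e ≠ 0)
    (hm : Fintype.card m = Module.finrank K V) :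
    ∃ τ : m → ι, e ∈ Set.range τ ∧ LinearIndependent K (v ∘ τ) := by
  obtain ⟨b, -, heb, hvb, hb⟩ :=
    exists_linearIndepOn_extension ((linearIndepOn_singleton_iff K).2 he) (Set.subset_univ {e})
  have hbspan : ⊤ ≤ Submodule.span K (Set.range fun x : b => v x) := by
    rw [← hspan, ← Set.image_univ, ← Set.image_eq_range]
    exact Submodule.span_le.2 hvb
  let B := Module.Basis.mk hb hbspan
  let _ : Fintype b := FiniteDimensional.fintypeBasisIndex B
  let g : m ≃ b := Fintype.equivOfCardEq (hm.trans (Module.finrank_eq_card_basis B))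
  exact ⟨Subtype.val ∘ g, ⟨g.symm ⟨e, heb rfl⟩, by simp⟩, hb.comp g g.injective⟩

theorem eq_or_bar_eq_of_fst_eq {α : Type*} {x y : α × Bool} (h : x.1 = y.1) :
    x = y ∨ bar x = y := by
  obtain ⟨e, b⟩ := x
  obtain ⟨e', b'⟩ := y
  cases h
  cases b <;> cases b' <;> simp [bar]

/-- The vector `φ(x)` of a signed index `x`. -/
def signedVec {α E : Type*} [Neg E] (v : α → E) (x : α × Bool) : E :=
  if x.2 then v x.1 else -v x.1

theorem signedVec_bar {α E : Type*} [InvolutiveNeg E] (v : α → E) (x : α × Bool) :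
    signedVec v (bar x) = -signedVec v x := by
  obtain ⟨e, b⟩ := x
  cases b <;> simp [signedVec, bar]

def signedMatrix {α R n : Type*} [Neg R] (v : α → n → R) (σ : n → α × Bool) : Matrix n n R :=
  of fun i j => signedVec v (σ j) i

theorem signedMatrix_eq_of {α R n : Type*} [Neg R] (v : α → n → R) (σ : n → α × Bool) :
    signedMatrix v σ = of fun i j => if (σ j).2 then v (σ j).1 i else -v (σ j).1 i := by
  ext i j
  simp only [signedMatrix, signedVec, of_apply]
  split_ifs <;> rfl

theorem signedMatrix_col {α R n : Type*} [Neg R] (v : α → n → R) (σ : n → α × Bool) (j : n) :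
    (signedMatrix v σ).col j = signedVec v (σ j) :=
  rfl

theorem signedMatrix_update {α R n : Type*} [Neg R] [DecidableEq n] (v : α → n → R)
    (σ : n → α × Bool) (k : n) (x : α × Bool) :
    signedMatrix v (update σ k x) = (signedMatrix v σ).updateCol k (signedVec v x) := by
  ext i j
  rcases eq_or_ne j k with rfl | hjk <;> simp [signedMatrix, *]

section Chirotope

variable {α K n : Type*} [CommRing K] [LinearOrder K] [Fintype n] [DecidableEq n]
  (v : α → n → K)

noncomputable def chirotope (σ : n → α × Bool) : ℤ :=
  SignType.sign (signedMatrix v σ).det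

theorem chirotope_eq_neg_one_or_eq_zero_or_eq_one (σ : n → α × Bool) :
    chirotope v σ = -1 ∨ chirotope v σ = 0 ∨ chirotope v σ = 1 := by
  unfold chirotope
  cases SignType.sign (signedMatrix v σ).det <;> simp

theorem chirotope_eq_zero_iff (σ : n → α × Bool) :
    chirotope v σ = 0 ↔ (signedMatrix v σ).det = 0 := by
  refine Iff.trans ?_ sign_eq_zero_iff
  unfold chirotope
  generalize SignType.sign (signedMatrix v σ).det = s
  cases s <;> decide

theorem chirotope_eq_zero_of_eq (σ : n → α × Bool) {i j : n} (hij : i ≠ j) (h : σ i = σ j) :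
    chirotope v σ = 0 :=
  (chirotope_eq_zero_iff v σ).2 <| det_zero_of_column_eq hij fun k => by simp [signedMatrix, h]

theorem chirotope_ne_zero_of_unique [Unique n] (hv : ∀ e, v e ≠ 0) (σ : n → α × Bool) :
    chirotope v σ ≠ 0 := by
  have hv' : v (σ default).1 default ≠ 0 := fun h =>
    hv _ (funext fun i => by rwa [Unique.eq_default i])
  rw [Ne, chirotope_eq_zero_iff, det_unique]
  simp only [signedMatrix, signedVec, of_apply]
  split_ifs <;> simpa using hv'

variable [IsStrictOrderedRing K]

theorem chirotope_mul_nonneg_iff (σ τ : n → α × Bool) :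
    0 ≤ chirotope v σ * chirotope v τ ↔ 0 ≤ (signedMatrix v σ).det * (signedMatrix v τ).det := by
  rw [chirotope, chirotope, ← SignType.coe_mul, ← sign_mul]
  refine Iff.trans ?_ sign_nonneg_iff
  generalize SignType.sign ((signedMatrix v σ).det * (signedMatrix v τ).det) = s
  cases s <;> decide

theorem chirotope_update_bar (σ : n → α × Bool) (k : n) (y : α × Bool) :
    chirotope v (update σ k (bar y)) = -chirotope v (update σ k y) := by
  rw [chirotope, chirotope, signedMatrix_update, signedMatrix_update, signedVec_bar,
    ← neg_one_smul K, det_updateCol_smul, neg_one_mul, Left.sign_neg, SignType.coe_neg]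

theorem chirotope_comp_swap (σ : n → α × Bool) {i j : n} (hij : i ≠ j) :
    chirotope v (σ ∘ Equiv.swap i j) = -chirotope v σ := by
  have : signedMatrix v (σ ∘ Equiv.swap i j) = (signedMatrix v σ).submatrix id (Equiv.swap i j) :=
    rfl
  rw [chirotope, chirotope, this, det_permute', Equiv.Perm.sign_swap hij, Units.val_neg,
    Units.val_one, Int.cast_neg, Int.cast_one, neg_one_mul, Left.sign_neg, SignType.coe_neg]

theorem chirotope_swap_bar (σ : n → α × Bool) {i j : n} (hij : i ≠ j) :
    chirotope v (fun m => if m = i then bar (σ j) else if m = j then σ i else σ m) =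
      chirotope v σ := by
  have : (fun m => if m = i then bar (σ j) else if m = j then σ i else σ m) =
      update (σ ∘ Equiv.swap i j) i (bar (σ j)) := by
    funext m
    rcases eq_or_ne m i with rfl | hmi
    · simp
    rcases eq_or_ne m j with rfl | hmj
    · simp [hmi]
    · simp [hmi, hmj, Equiv.swap_apply_of_ne_of_ne hmi hmj]
  rw [this, chirotope_update_bar, update_eq_self_iff.2 (by simp), chirotope_comp_swap v σ hij,
    neg_neg]

theorem chirotope_eq_zero_of_not_injective (σ : n → α × Bool)
    (hσ : ¬ Injective fun i => (σ i).1) : chirotope v σ = 0 := by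
  obtain ⟨i, j, hσij, hij⟩ := not_injective_iff.1 hσ
  rcases eq_or_bar_eq_of_fst_eq hσij with h | h
  · exact chirotope_eq_zero_of_eq v σ hij h
  · rw [← neg_eq_zero, ← update_eq_self i σ, ← chirotope_update_bar]
    exact chirotope_eq_zero_of_eq v _ hij (by simp [h, hij.symm])

theorem exists_chirotope_update_ne_zero {σ τ : n → α × Bool} (hσ : chirotope v σ ≠ 0)
    (hτ : chirotope v τ ≠ 0) (k : n) : ∃ i, chirotope v (update σ k (τ i)) ≠ 0 := by
  by_contra! h
  rw [Ne, chirotope_eq_zero_iff] at hσ hτ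
  simp only [chirotope_eq_zero_iff, signedMatrix_update] at h
  have key := det_mul_det_updateCol (signedMatrix v τ) (signedMatrix v σ) k (signedVec v (σ k))
  simp only [signedMatrix_col, h, mul_zero, Finset.sum_const_zero] at key
  rw [← signedMatrix_update, update_eq_self] at key
  exact hσ ((mul_eq_zero.1 key).resolve_left hτ)

theorem chirotope_mul_chirotope_update_update_nonneg (σ : n → α × Bool) {p q : n} (hpq : p ≠ q)
    (y₁ y₂ : α × Bool)
    (h₁ : 0 ≤ chirotope v (update σ p y₁) * chirotope v (update σ q y₂))
    (h₂ : 0 ≤ chirotope v (update σ p y₂) * chirotope v (update σ q (bar y₁))) :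
    0 ≤ chirotope v σ * chirotope v (update (update σ p y₁) q y₂) := by
  rw [chirotope_mul_nonneg_iff] at h₁ h₂ ⊢
  simp only [signedMatrix_update, signedVec_bar] at h₁ h₂ ⊢
  rw [← neg_one_smul K (signedVec v y₁), det_updateCol_smul] at h₂
  rw [det_mul_det_updateCol_updateCol _ hpq]
  linarith

end Chirotope

theorem exists_chirotope_ne_zero {α K n : Type*} [Field K] [LinearOrder K] [Fintype n]
    [DecidableEq n] (v : α → n → K) (hspan : Submodule.span K (Set.range v) = ⊤) {e : α}
    (he : v e ≠ 0) : ∃ τ : n → α, (∃ i, τ i = e) ∧ chirotope v (fun i => (τ i, true)) ≠ 0 := by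
  obtain ⟨τ, he, hτ⟩ := exists_linearIndependent_comp_of_span_eq_top hspan he
    (Module.finrank_fintype_fun_eq_card K).symm
  refine ⟨τ, he, ?_⟩
  rw [Ne, chirotope_eq_zero_iff, ← Ne, ← isUnit_iff_ne_zero, ← isUnit_iff_isUnit_det,
    ← linearIndependent_cols_iff_isUnit]
  exact hτ

theorem chirotope_c4 {α K : Type*} [CommRing K] [LinearOrder K] [IsStrictOrderedRing K] {r : ℕ}
    (hr : 0 < r) {v : α → Fin r → K} (hv : ∀ e, v e ≠ 0) (σ : Fin r → α × Bool) (y₁ y₂ : α × Bool)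
    (h₁ : 0 ≤ chirotope v (update σ ⟨r - 2, Nat.sub_lt hr two_pos⟩ y₁) *
          chirotope v (update σ ⟨r - 1, Nat.sub_lt hr one_pos⟩ y₂))
    (h₂ : 0 ≤ chirotope v (update σ ⟨r - 2, Nat.sub_lt hr two_pos⟩ y₂) *
          chirotope v (update σ ⟨r - 1, Nat.sub_lt hr one_pos⟩ (bar y₁))) :
    0 ≤ chirotope v σ *
          chirotope v (update (update σ ⟨r - 2, Nat.sub_lt hr two_pos⟩ y₁)
              ⟨r - 1, Nat.sub_lt hr one_pos⟩ y₂) := by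
  rcases Nat.lt_or_ge r 2 with hr1 | hr2
  · obtain rfl : r = 1 := by omega
    generalize (⟨1 - 2, Nat.sub_lt hr two_pos⟩ : Fin 1) = p at h₁ h₂ ⊢
    generalize (⟨1 - 1, Nat.sub_lt hr one_pos⟩ : Fin 1) = q at h₁ h₂ ⊢
    obtain rfl := Subsingleton.elim p q
    rw [chirotope_update_bar] at h₂
    have hne := chirotope_ne_zero_of_unique v hv
    exact absurd (by linarith) (mul_ne_zero (hne (update σ p y₁)) (hne (update σ p y₂)))
  · exact chirotope_mul_chirotope_update_update_nonneg v σ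
      (fun h => by rw [Fin.mk.injEq] at h; omega) y₁ y₂ h₁ h₂

/-- The determinant-sign map of a spanning configuration of nonzero
vectors `v₁,…,v_n` in `ℝ^r` (with `φ(e) = v_e`, `φ(ē) = -v_e`) is a chirotope. -/
theorem det_sign_isChirotope (r n : ℕ) (hr : 0 < r)
    (v : Fin n → Fin r → ℝ) (hv : ∀ i, v i ≠ 0)
    (hspan : Submodule.span ℝ (Set.range v) = ⊤) :
    IsChirotope r (Fin n) (fun σ =>
      let d := Matrix.det (Matrix.of fun i j : Fin r =>
        if (σ j).2 then v (σ j).1 i else -(v (σ j).1 i))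
      if 0 < d then 1 else if d < 0 then -1 else 0) := by
  have key : IsChirotope r (Fin n) (chirotope v) :=
    { rpos := hr
      values := chirotope_eq_neg_one_or_eq_zero_or_eq_one v
      degenerate := chirotope_eq_zero_of_not_injective v
      c1 := fun e => exists_chirotope_ne_zero v hspan (hv e)
      c2neg := fun σ i _ => by rw [chirotope_update_bar, update_eq_self]
      c2swap := fun σ i j hji => chirotope_swap_bar v σ (fun h => by subst h; omega)
      c3 := fun σ τ hσ hτ => exists_chirotope_update_ne_zero v hσ hτ _
      c4 := chirotope_c4 hr hv }
  convert key using 2 with σ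
  dsimp only
  rw [chirotope, signedMatrix_eq_of, sign_apply]
  split_ifs <;> rfl
end

section
/- The determinant-sign map of a spanning configuration of nonzero vectors in ℝ^r satisfies the three-term Grassmann–Plücker sign condition: for nonzero vectors v₁,...,v_r, w₁, w₂ in ℝ^r, if det(v₁,...,v_{r-2},w₁,v_r)·det(v₁,...,v_{r-1},w₂) ≥ 0 and det(v₁,...,v_{r-2},w₂,v_r)·det(v₁,...,v_{r-1},-w₁) ≥ 0, then det(v₁,...,v_r)·det(v₁,...,v_{r-2},w₁,w₂) ≥ 0. -/
/-!
Since `det` is linear in each row, it suffices to check the identity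
`det M * det M[p ← x, q ← y] = det M[p ← x] * det M[q ← y] - det M[p ← y] * det M[q ← x]`
for `y` running over the rows of `M`, which span everything when `M` is invertible. In the sign
statement the hypotheses say that both terms on the right are nonnegative; if `det M = 0` there
is nothing to prove.
-/

/-- The determinant of the `r × r` matrix whose columns are the vectors `u 0, …, u (r-1)`. -/
noncomputable def colDet (r : ℕ) (u : Fin r → Fin r → ℝ) : ℝ :=
  Matrix.det (Matrix.of fun i j : Fin r => u j i)

namespace Matrix

theorem of_update {n α : Type*} [DecidableEq n] (u : n → n → α) (i : n) (x : n → α) :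
    of (Function.update u i x) = (of u).updateRow i x :=
  rfl

variable {n R : Type*} [Fintype n] [DecidableEq n] [CommRing R]

theorem det_updateRow_updateRow_swap (M : Matrix n n R) {p q : n} (hpq : p ≠ q) (x : n → R) :
    ((M.updateRow p x).updateRow q (M p)).det = -(M.updateRow q x).det := by
  have hswap : (M.updateRow p x).updateRow q (M p) =
      (M.updateRow q x).submatrix (Equiv.swap p q) id := by
    ext i : 1
    rcases eq_or_ne i q with rfl | hiq
    · simp [hpq]
    rcases eq_or_ne i p with rfl | hip
    · simp [hpq]
    · simp [hip, hiq, Equiv.swap_apply_of_ne_of_ne hip hiq]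
  rw [hswap, det_permute, Equiv.Perm.sign_swap hpq]
  simp

theorem det_updateRow_updateRow_sum (M : Matrix n n R) {p q : n} (hpq : p ≠ q) (x : n → R)
    (c : n → R) :
    ((M.updateRow p x).updateRow q (∑ j, c j • M j)).det =
      c q * (M.updateRow p x).det - c p * (M.updateRow q x).det := by
  let f := (detRowAlternating : (n → R) [⋀^n]→ₗ[R] R).toMultilinearMap.toLinearMap
    (M.updateRow p x) q
  have hf : ∀ y, f y = ((M.updateRow p x).updateRow q y).det := fun _ => rfl
  have hrest : ∀ j, j ≠ q ∧ j ≠ p → c j • f (M j) = 0 := by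
    rintro j ⟨hjq, hjp⟩
    -- the row `M j` already occurs in `M.updateRow p x`, at index `j`
    rw [hf, det_zero_of_row_eq hjq (by simp [hjq, hjp]), smul_zero]
  rw [← hf, map_sum]
  simp only [map_smul]
  rw [Fintype.sum_eq_add q p hpq.symm hrest, hf, hf, det_updateRow_updateRow_swap M hpq,
    ← updateRow_ne (M := M) (b := x) hpq.symm, updateRow_eq_self, smul_eq_mul, smul_eq_mul]
  ring

theorem det_mul_det_updateRow_updateRow (M : Matrix n n R) (hM : IsUnit M.det) {p q : n}
    (hpq : p ≠ q) (x y : n → R) :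
    M.det * ((M.updateRow p x).updateRow q y).det =
      (M.updateRow p x).det * (M.updateRow q y).det -
        (M.updateRow p y).det * (M.updateRow q x).det := by
  obtain ⟨c, rfl⟩ : ∃ c, y = ∑ j, c j • M j :=
    ⟨y ᵥ* M⁻¹, by rw [← vecMul_eq_sum, vecMul_vecMul, nonsing_inv_mul M hM, vecMul_one]⟩
  rw [det_updateRow_updateRow_sum M hpq, det_updateRow_sum, det_updateRow_sum, smul_eq_mul,
    smul_eq_mul]
  ring

theorem det_updateRow_neg (M : Matrix n n R) (i : n) (x : n → R) :
    (M.updateRow i (-x)).det = -(M.updateRow i x).det := by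
  rw [← neg_one_smul R x, det_updateRow_smul, neg_one_mul]

end Matrix

theorem colDet_eq_det (r : ℕ) (u : Fin r → Fin r → ℝ) : colDet r u = (Matrix.of u).det :=
  Matrix.det_transpose _

/-- the three-term Grassmann–Plücker sign condition for determinants of
nonzero vectors `v₁,…,v_r, w₁, w₂` in `ℝ^r`. -/
theorem det_grassmann_pluecker_sign (r : ℕ) (hr : 2 ≤ r)
    (v : Fin r → Fin r → ℝ) (w₁ w₂ : Fin r → ℝ)
    (h1 : 0 ≤ colDet r (Function.update v ⟨r - 2, by omega⟩ w₁) *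
            colDet r (Function.update v ⟨r - 1, by omega⟩ w₂))
    (h2 : 0 ≤ colDet r (Function.update v ⟨r - 2, by omega⟩ w₂) *
            colDet r (Function.update v ⟨r - 1, by omega⟩ (-w₁))) :
    0 ≤ colDet r v *
        colDet r (Function.update (Function.update v ⟨r - 2, by omega⟩ w₁)
          ⟨r - 1, by omega⟩ w₂) := by
  simp only [colDet_eq_det, Matrix.of_update, Matrix.det_updateRow_neg, mul_neg] at h1 h2 ⊢
  rcases eq_or_ne (Matrix.of v).det 0 with hM | hM
  · rw [hM, zero_mul]
  have hpq : (⟨r - 2, by omega⟩ : Fin r) ≠ ⟨r - 1, by omega⟩ := by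
    rw [ne_eq, Fin.mk.injEq]
    omega
  rw [Matrix.det_mul_det_updateRow_updateRow _ hM.isUnit hpq]
  linarith
end

section
/- Let X be a hyperline sequence of rank 2 over E with period length 2k, realized as a cyclic sequence of atoms X⁰,...,X^{2k-1} with X^{a+k} = -X^a. Define χ([x₁,x₂]) = +1 if X induces the cyclic order (x₁,x₂,x̄₁,x̄₂), χ([x₁,x₂]) = -1 if it induces (x₂,x₁,x̄₂,x̄₁), and χ([x₁,x₂]) = 0 if x₁* and x₂* are incident to a common atom. Then χ satisfies chirotope axioms (C1)-(C4) of rank 2. -/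
/-!
Place the atoms on the unit circle, atom `a` at angle `aπ/k` (so `x̄` is antipodal to `x`).
Then `χ[x, y]` is the sign of `sin (ψ y - ψ x)`, the orientation of the unit vectors at angles
`ψ x` and `ψ y`. (C2) is the antiperiodicity of `sin`, (C3) holds because `sin θ = 0` iff
`2 • θ = 0`, and (C4) follows from the three-term Grassmann–Plücker relation
`sin (b - a) sin (d - c) = sin (c - a) sin (d - b) + sin (d - a) sin (b - c)`,
whose two summands are nonnegative by the hypotheses of (C4).
-/

open Real

theorem Real.Angle.sin_sub_mul_sin_sub (a b c d : Real.Angle) :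
    (b - a).sin * (d - c).sin = (c - a).sin * (d - b).sin + (d - a).sin * (b - c).sin := by
  induction a using Real.Angle.induction_on
  induction b using Real.Angle.induction_on
  induction c using Real.Angle.induction_on
  induction d using Real.Angle.induction_on
  simp only [← Real.Angle.coe_sub, Real.Angle.sin_coe, Real.sin_sub]
  ring

theorem sign_mul_sign_nonneg_iff {x y : ℝ} :
    0 ≤ (SignType.sign x : ℤ) * SignType.sign y ↔ 0 ≤ x * y := by
  rw [← SignType.coe_mul, ← sign_mul, ← sign_nonneg_iff (a := x * y)]
  generalize SignType.sign (x * y) = s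
  cases s <;> decide

theorem SignType.intCast_eq_zero {s : SignType} : (s : ℤ) = 0 ↔ s = 0 := by
  cases s <;> decide

theorem Real.Angle.sign_eq_zero_iff_two_nsmul_eq_zero {θ : Real.Angle} :
    θ.sign = 0 ↔ (2 : ℕ) • θ = 0 := by
  rw [Real.Angle.sign_eq_zero_iff, Real.Angle.two_nsmul_eq_zero_iff]

theorem Fin.two_injective_iff {β : Type*} {f : Fin 2 → β} : Function.Injective f ↔ f 0 ≠ f 1 := by
  refine ⟨fun h h01 => zero_ne_one (h h01), fun h a b hab => ?_⟩
  fin_cases a <;> fin_cases b <;> simp_all [eq_comm]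

theorem eq_or_eq_bar_of_fst_eq {α : Type*} {x y : α × Bool} (h : x.1 = y.1) :
    y = x ∨ y = bar x := by
  obtain ⟨a, b⟩ := x
  obtain ⟨a', b'⟩ := y
  cases b <;> cases b' <;> simp_all [bar]

theorem Real.Angle.sign_coe_pi_mul_div_eq_one {x y : ℝ} (hx : 0 < x) (hxy : x < y) :
    (↑(π * x / y) : Real.Angle).sign = 1 := by
  have hy : 0 < y := hx.trans hxy
  rw [Real.Angle.sign, Real.Angle.sin_coe, sign_eq_one_iff]
  refine Real.sin_pos_of_pos_of_lt_pi (by positivity) ?_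
  rw [div_lt_iff₀ hy]
  nlinarith [Real.pi_pos]

section AngleChirotope

variable {α : Type*} (ψ : α × Bool → Real.Angle)

noncomputable def angleChirotope (σ : Fin 2 → α × Bool) : ℤ := (ψ (σ 1) - ψ (σ 0)).sign

variable {ψ}

theorem angleChirotope_eq_zero_of_fst_eq (hbar : ∀ x, ψ (bar x) = ψ x + π)
    {σ : Fin 2 → α × Bool} (h : (σ 0).1 = (σ 1).1) : angleChirotope ψ σ = 0 := by
  rcases eq_or_eq_bar_of_fst_eq h with h | h <;> simp [angleChirotope, h, hbar]

theorem isChirotope_angleChirotope (hbar : ∀ x, ψ (bar x) = ψ x + π)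
    (hc1 : ∀ e, ∃ y, (ψ y - ψ (e, true)).sign ≠ 0) : IsChirotope 2 α (angleChirotope ψ) where
  rpos := two_pos
  values σ := by
    unfold angleChirotope
    cases (ψ (σ 1) - ψ (σ 0)).sign <;> simp
  degenerate σ h :=
    angleChirotope_eq_zero_of_fst_eq hbar (not_ne_iff.mp (Fin.two_injective_iff.not.mp h))
  c1 e := by
    obtain ⟨y, hy⟩ := hc1 e
    refine ⟨![e, y.1], ⟨0, rfl⟩, ?_⟩
    rcases eq_or_eq_bar_of_fst_eq (x := y) (y := (y.1, true)) rfl with h | h <;>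
      simpa [angleChirotope, SignType.intCast_eq_zero, h, hbar, add_sub_right_comm,
        Real.Angle.sign_add_pi] using hy
  c2neg σ i hi := by
    obtain rfl : i = 1 := Fin.ext hi
    simp [angleChirotope, hbar, add_sub_right_comm, Real.Angle.sign_add_pi]
  c2swap σ i j hj := by
    have := j.isLt
    obtain rfl : i = 0 := Fin.ext (by omega)
    obtain rfl : j = 1 := Fin.ext (by omega)
    simp [angleChirotope, hbar, sub_add_eq_sub_sub, Real.Angle.sign_sub_pi, ← Real.Angle.sign_neg]
  c3 σ τ _ hτ := by
    by_contra! h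
    simp only [angleChirotope, Nat.add_one_sub_one, Fin.mk_one, Function.update_self,
      ne_eq, Fin.isValue, zero_ne_one, not_false_eq_true, Function.update_of_ne,
      SignType.intCast_eq_zero, Real.Angle.sign_eq_zero_iff_two_nsmul_eq_zero] at h hτ
    apply hτ
    rw [← sub_sub_sub_cancel_right _ _ (ψ (σ 0)), smul_sub, h 0, h 1, sub_zero]
  c4 σ y₁ y₂ h₁ h₂ := by
    simp only [angleChirotope, Nat.add_one_sub_one, Fin.mk_one, Nat.sub_self, Fin.zero_eta,
      Function.update_self, Function.update_of_ne, ne_eq, zero_ne_one, one_ne_zero,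
      not_false_eq_true, Fin.isValue] at h₁ h₂ ⊢
    simp only [Real.Angle.sign, sign_mul_sign_nonneg_iff] at h₁ h₂ ⊢
    have hbar₁ : (ψ (bar y₁) - ψ (σ 0)).sin = -(ψ y₁ - ψ (σ 0)).sin := by
      rw [hbar, add_sub_right_comm, Real.Angle.sin_add_pi]
    have hswap : (ψ (σ 1) - ψ y₂).sin = -(ψ y₂ - ψ (σ 1)).sin := by
      rw [← Real.Angle.sin_neg, neg_sub]
    rw [hbar₁, hswap, neg_mul_neg] at h₂
    rw [Real.Angle.sin_sub_mul_sin_sub]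
    linarith

end AngleChirotope

noncomputable def ZMod.toAngle (k : ℕ) : ZMod (2 * k) →+ Real.Angle :=
  ZMod.lift (2 * k) ⟨zmultiplesHom Real.Angle ↑(π / k), by
    rcases Nat.eq_zero_or_pos k with rfl | hk
    · simp
    · rw [zmultiplesHom_apply, ← Real.Angle.coe_zsmul, zsmul_eq_mul]
      push_cast
      rw [show (2 * k * (π / k) : ℝ) = 2 * π by field_simp, Real.Angle.coe_two_pi]⟩

namespace ZMod

theorem sign_toAngle_one {k : ℕ} (hk : 1 < k) : (toAngle k 1).sign = 1 := by
  rw [toAngle, ← Int.cast_one, ZMod.lift_coe]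
  simpa using Real.Angle.sign_coe_pi_mul_div_eq_one one_pos (show (1 : ℝ) < k by exact_mod_cast hk)

variable {k : ℕ} [NeZero k]

theorem toAngle_apply (d : ZMod (2 * k)) : toAngle k d = ↑(π * d.val / k) := by
  conv_lhs => rw [← ZMod.natCast_zmod_val d, ← Int.cast_natCast]
  rw [toAngle, ZMod.lift_coe, zmultiplesHom_apply, natCast_zsmul, ← Real.Angle.coe_nsmul,
    nsmul_eq_mul, mul_div_left_comm, mul_div_assoc]

theorem val_natCast_self : (k : ZMod (2 * k)).val = k :=
  ZMod.val_cast_of_lt (by have := NeZero.pos k; omega)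

theorem toAngle_natCast_self : toAngle k k = π := by
  rw [toAngle_apply, val_natCast_self, mul_div_assoc, div_self (NeZero.ne _), mul_one]

theorem sign_toAngle (d : ZMod (2 * k)) :
    ((toAngle k d).sign : ℤ) = if d = 0 ∨ d = k then 0 else if d.val < k then 1 else -1 := by
  split_ifs with hd hlt
  · rcases hd with rfl | rfl <;> simp [toAngle_natCast_self]
  · have : d.val ≠ 0 := by rw [Ne, ZMod.val_eq_zero]; exact fun h => hd (Or.inl h)
    rw [toAngle_apply, Real.Angle.sign_coe_pi_mul_div_eq_one (by positivity) (by exact_mod_cast hlt)]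
    rfl
  · have hne : d.val ≠ k := fun h => hd (Or.inr (by rw [← ZMod.natCast_zmod_val d, h]))
    have hgt : k < d.val := by omega
    have hlt2 : d.val < 2 * k := ZMod.val_lt d
    have hsplit : π * d.val / k = π * (d.val - k : ℝ) / k + π := by
      have : (k : ℝ) ≠ 0 := NeZero.ne _
      field_simp; ring
    rw [toAngle_apply, hsplit, Real.Angle.coe_add, Real.Angle.sign_add_pi,
      Real.Angle.sign_coe_pi_mul_div_eq_one]
    · rfl
    · rw [sub_pos]; exact_mod_cast hgt
    · rw [sub_lt_iff_lt_add]; exact_mod_cast (by omega : d.val < k + k)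

end ZMod

/-- a hyperline sequence of rank 2 over `E` with period length `2k`
(encoded by the position map `pos : E ∪ Ē → C_{2k}` sending each signed index to the
atom containing it, with `pos(x̄) = pos(x) + k` and every atom nonempty) induces a
rank-2 chirotope: `χ([x₁,x₂]) = +1` if the cyclic order is `(x₁,x₂,x̄₁,x̄₂)`,
`-1` if it is `(x₂,x₁,x̄₂,x̄₁)`, and `0` if `x₁*`, `x₂*` meet a common atom. -/
theorem hyperline_rank_two_isChirotope {α : Type*} [DecidableEq α]
    (k : ℕ) (hk : 2 ≤ k)
    (pos : α × Bool → ZMod (2 * k))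
    (hbar : ∀ x, pos (bar x) = pos x + (k : ZMod (2 * k)))
    (hsurj : Function.Surjective pos) :
    IsChirotope 2 α (fun σ : Fin 2 → α × Bool =>
      if (σ 0).1 = (σ 1).1 then 0
      else if pos (σ 1) = pos (σ 0) ∨ pos (σ 1) = pos (σ 0) + (k : ZMod (2 * k)) then 0
      else if (pos (σ 1) - pos (σ 0)).val < k then 1 else -1) := by
  have : NeZero k := ⟨by omega⟩
  set ψ : α × Bool → Real.Angle := fun x => ZMod.toAngle k (pos x)
  have hψ : ∀ x, ψ (bar x) = ψ x + π := by simp [ψ, hbar, ZMod.toAngle_natCast_self]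
  convert isChirotope_angleChirotope hψ fun e => ?_ using 1
  · funext σ
    by_cases h : (σ 0).1 = (σ 1).1
    · rw [if_pos h, angleChirotope_eq_zero_of_fst_eq hψ h]
    · rw [if_neg h, angleChirotope, ← map_sub, ZMod.sign_toAngle]
      simp only [sub_eq_iff_eq_add, zero_add, add_comm (k : ZMod (2 * k))]
  · obtain ⟨y, hy⟩ := hsurj (pos (e, true) + 1)
    refine ⟨y, ?_⟩
    rw [← map_sub, hy, add_sub_cancel_left, ZMod.sign_toAngle_one (by omega)]
    exact one_ne_zero
end

section
/- Let χ be a map on oriented 1-simplices over a finite set E to {-1,0,+1} satisfying the rank-2 chirotope axioms, and let x^{(a)} ∈ 𝐄 with χ([x^{(a)}, y]) = 1 for some y. Then the set X^{a+1} = { x ∈ 𝐄 : χ([x^{(a)},x]) = 1, and for all y ∈ 𝐄 with χ([x^{(a)},y]) = 1 one has χ([x,y]) ≥ 0 } is nonempty. -/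
section Aux

variable {α : Type*} {χ : (Fin 2 → α × Bool) → ℤ}

lemma upd0 (a b c : α × Bool) :
    Function.update ![a, b] (0 : Fin 2) c = ![c, b] := by
  funext i; fin_cases i <;> simp [Function.update]

lemma upd1 (a b c : α × Bool) :
    Function.update ![a, b] (1 : Fin 2) c = ![a, c] := by
  funext i; fin_cases i <;> simp [Function.update]

lemma chi_negsnd (h : IsChirotope 2 α χ) (a b : α × Bool) :
    χ ![a, bar b] = - χ ![a, b] := by
  have := h.c2neg ![a, b] ⟨1, by norm_num⟩ rfl
  have e : (⟨1, by norm_num⟩ : Fin 2) = 1 := rfl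
  rw [e] at this
  rw [upd1] at this
  simpa using this

lemma chi_swap (h : IsChirotope 2 α χ) (a b : α × Bool) :
    χ ![bar b, a] = χ ![a, b] := by
  have := h.c2swap ![a, b] 0 1 rfl
  have e : (fun m : Fin 2 => if m = 0 then bar (![a,b] 1) else if m = 1 then ![a,b] 0
      else ![a,b] m) = ![bar b, a] := by
    funext m; fin_cases m <;> simp
  rwa [e] at this

lemma bar_bar (x : α × Bool) : bar (bar x) = x := by
  simp [bar]

lemma chi_anti (h : IsChirotope 2 α χ) (a b : α × Bool) :
    χ ![b, a] = - χ ![a, b] := by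
  have h1 := chi_swap h a (bar b)
  rw [bar_bar, chi_negsnd h a b] at h1
  exact h1

lemma chi_refl (h : IsChirotope 2 α χ) (a : α × Bool) : χ ![a, a] = 0 := by
  apply h.degenerate
  intro hinj
  have : (0 : Fin 2) = 1 := hinj (by simp)
  simp at this

/-- transitivity on `S = {x : χ ![xa, x] = 1}` -/
lemma chi_trans (h : IsChirotope 2 α χ) (xa x y z : α × Bool)
    (hx : χ ![xa, x] = 1) (hy : χ ![xa, y] = 1) (hz : χ ![xa, z] = 1)
    (hxy : 0 ≤ χ ![x, y]) (hyz : 0 ≤ χ ![y, z]) : 0 ≤ χ ![x, z] := by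
  have H := h.c4 ![xa, y] x z
  have e0 : (⟨2 - 2, Nat.sub_lt h.rpos two_pos⟩ : Fin 2) = 0 := rfl
  have e1 : (⟨2 - 1, Nat.sub_lt h.rpos one_pos⟩ : Fin 2) = 1 := rfl
  simp only [e0, e1, upd0, upd1] at H
  have := H ?_ ?_
  · rw [hy, one_mul] at this
    exact this
  · rw [hz]
    simpa using hxy
  · rw [chi_anti h y z, chi_negsnd h xa x, hx]
    nlinarith
end Aux

/-- bottom element of a total transitive relation on a nonempty finset -/
lemma exists_bot {β : Type*} (r : β → β → Prop) (s : Finset β) (hs : s.Nonempty)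
    (tot : ∀ a ∈ s, ∀ b ∈ s, r a b ∨ r b a)
    (tr : ∀ a ∈ s, ∀ b ∈ s, ∀ c ∈ s, r a b → r b c → r a c) :
    ∃ x ∈ s, ∀ y ∈ s, r x y := by
  classical
  revert hs tot tr
  induction s using Finset.induction_on with
  | empty => intro hs _ _; exact absurd hs (by simp)
  | @insert a s ha IH =>
    intro _ tot tr
    by_cases hse : s.Nonempty
    · obtain ⟨x, hxs, hxb⟩ := IH hse
        (fun a ha b hb => tot a (by simp [ha]) b (by simp [hb]))
        (fun a ha b hb c hc => tr a (by simp [ha]) b (by simp [hb]) c (by simp [hc]))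
      have hxi : x ∈ insert a s := by simp [hxs]
      have hai : a ∈ insert a s := by simp
      rcases tot x hxi a hai with hxa | hax
      · exact ⟨x, hxi, fun y hy => by
          rcases Finset.mem_insert.1 hy with rfl | hys
          · exact hxa
          · exact hxb y hys⟩
      · exact ⟨a, hai, fun y hy => by
          rcases Finset.mem_insert.1 hy with rfl | hys
          · rcases tot y hy y hy with h' | h' <;> exact h'
          · exact tr a hai x hxi y (by simp [hys]) hax (hxb y hys)⟩
    · rw [Finset.not_nonempty_iff_eq_empty] at hse
      subst hse
      refine ⟨a, by simp, fun y hy => ?_⟩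
      simp only [Finset.insert_empty, Finset.mem_singleton] at hy
      subst hy
      rcases tot y (by simp) y (by simp) with h' | h' <;> exact h'


/-- for a rank-2 chirotope over a finite set and any `x⁽ᵃ⁾` admitting some
`y` with `χ([x⁽ᵃ⁾,y]) = 1`, the set
`X^{a+1} = {x : χ([x⁽ᵃ⁾,x]) = 1 and χ([x,y]) ≥ 0 for all y with χ([x⁽ᵃ⁾,y]) = 1}`
is nonempty. -/
theorem next_atom_nonempty {α : Type*} [Fintype α]
    (χ : (Fin 2 → α × Bool) → ℤ) (h : IsChirotope 2 α χ)
    (xa : α × Bool) (hxa : ∃ y, χ ![xa, y] = 1) :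
    ∃ x : α × Bool, χ ![xa, x] = 1 ∧
      ∀ y : α × Bool, χ ![xa, y] = 1 → 0 ≤ χ ![x, y] := by
  classical
  obtain ⟨y0, hy0⟩ := hxa
  set S : Finset (α × Bool) := Finset.univ.filter (fun x => χ ![xa, x] = 1) with hS
  have hmem : ∀ x, x ∈ S ↔ χ ![xa, x] = 1 := by
    intro x; simp [hS]
  have hSne : S.Nonempty := ⟨y0, (hmem y0).2 hy0⟩
  have tot : ∀ a ∈ S, ∀ b ∈ S, 0 ≤ χ ![a, b] ∨ 0 ≤ χ ![b, a] := by
    intro a _ b _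
    rcases h.values ![a, b] with hv | hv | hv
    · right; rw [chi_anti h a b, hv]; norm_num
    · left; omega
    · left; omega
  obtain ⟨x, hxS, hxb⟩ := exists_bot (fun a b => 0 ≤ χ ![a, b]) S hSne tot
    (fun a ha b hb c hc => chi_trans h xa a b c
      ((hmem a).1 ha) ((hmem b).1 hb) ((hmem c).1 hc))
  exact ⟨x, (hmem x).1 hxS, fun y hy => hxb y ((hmem y).2 hy)⟩
end

section
/- Let E be a finite totally ordered set. Any oriented d-simplex over E (a (d+1)-tuple of signed indices with pairwise distinct underlying elements) is equivalent, under the equivalence relation generated by [x₁,...,x_{d+1}] ∼ [x₁,...,x_{i-1}, x̄_{i+1}, x_i, x_{i+2},...,x_{d+1}], to exactly one simplex of the form [e₁,...,e_{d+1}] or [e₁,...,e_d, ē_{d+1}] with e₁ < e₂ < ... < e_{d+1} in E. -/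
/-- One elementary move on oriented `d`-simplices:
`[x₁,…,x_{d+1}] ∼ [x₁,…,x_{i-1}, x̄_{i+1}, x_i, x_{i+2},…,x_{d+1}]`. -/
def simplexStep {α : Type*} (d : ℕ) (σ τ : Fin (d + 1) → α × Bool) : Prop :=
  ∃ i j : Fin (d + 1), j.val = i.val + 1 ∧
    τ = fun m => if m = i then bar (σ j) else if m = j then σ i else σ m

/-!
A move transposes two adjacent underlying elements and flips one bar. Hence along any chain of
moves the underlying tuple is permuted by some `p` with `sign p` equal to the product of the
signs of the two simplices (a bar counting as `-1`): this invariant gives uniqueness, since two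
sorted simplices with the same underlying set differ by `p = 1` and therefore carry the same
number of bars modulo `2`. For existence, adjacent transpositions generate the symmetric group,
so the underlying elements can be sorted; then applying the same move twice flips the bars at
two adjacent positions without changing the underlying tuple, which pushes all bars to the
last position.
-/

namespace OrientedSimplex

variable {α : Type*} {d : ℕ}

def move (σ : Fin (d + 1) → α × Bool) (i j : Fin (d + 1)) : Fin (d + 1) → α × Bool :=
  fun m => if m = i then bar (σ j) else if m = j then σ i else σ m

lemma simplexStep_move (σ : Fin (d + 1) → α × Bool) {i j : Fin (d + 1)}
    (h : j.val = i.val + 1) : simplexStep d σ (move σ i j) :=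
  ⟨i, j, h, rfl⟩

lemma fst_move (σ : Fin (d + 1) → α × Bool) (i j : Fin (d + 1)) :
    (fun m => (move σ i j m).1) = (fun m => (σ m).1) ∘ Equiv.swap i j := by
  funext m
  rcases eq_or_ne m i with rfl | hmi
  · simp [move, bar]
  rcases eq_or_ne m j with rfl | hmj
  · simp [move, hmi]
  · simp [move, hmi, hmj, Equiv.swap_apply_of_ne_of_ne hmi hmj]

lemma move_move (σ : Fin (d + 1) → α × Bool) {i j : Fin (d + 1)} (hij : i ≠ j)
    (m : Fin (d + 1)) :
    move (move σ i j) i j m = if m = i ∨ m = j then bar (σ m) else σ m := by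
  rcases eq_or_ne m i with rfl | hmi
  · simp [move, hij.symm]
  rcases eq_or_ne m j with rfl | hmj
  · simp [move, hmi]
  · simp [move, hmi, hmj]

def entrySign (x : α × Bool) : ℤˣ := if x.2 then 1 else -1

lemma entrySign_bar (x : α × Bool) : entrySign (bar x) = -entrySign x := by
  rcases x with ⟨a, _ | _⟩ <;> simp [entrySign, bar]

lemma entrySign_inj {x y : α × Bool} : entrySign x = entrySign y ↔ x.2 = y.2 := by
  rcases x with ⟨a, _ | _⟩ <;> rcases y with ⟨b, _ | _⟩ <;> simp [entrySign]

def barSign (σ : Fin (d + 1) → α × Bool) : ℤˣ := ∏ m, entrySign (σ m)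

lemma barSign_move (σ : Fin (d + 1) → α × Bool) {i j : Fin (d + 1)} (hij : i ≠ j) :
    barSign (move σ i j) = -barSign σ := by
  have hentry : ∀ m, entrySign (move σ i j m) =
      (if m = i then -1 else 1) * entrySign (σ (Equiv.swap i j m)) := by
    intro m
    rcases eq_or_ne m i with rfl | hmi
    · simp [move, entrySign_bar]
    rcases eq_or_ne m j with rfl | hmj
    · simp [move, hmi]
    · simp [move, hmi, hmj, Equiv.swap_apply_of_ne_of_ne hmi hmj]
  simp only [barSign, hentry, Finset.prod_mul_distrib, Finset.prod_ite_eq', Finset.mem_univ,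
    if_true, neg_one_mul]
  rw [Equiv.prod_comp (Equiv.swap i j) fun m => entrySign (σ m)]

lemma barSign_of_forall_ne_last {τ : Fin (d + 1) → α × Bool}
    (hτ : ∀ m, m ≠ Fin.last d → (τ m).2 = true) :
    barSign τ = entrySign (τ (Fin.last d)) :=
  Fintype.prod_eq_single _ fun m hm => by simp [entrySign, hτ m hm]

lemma exists_perm_of_eqvGen {σ τ : Fin (d + 1) → α × Bool}
    (h : Relation.EqvGen (simplexStep d) σ τ) :
    ∃ p : Equiv.Perm (Fin (d + 1)), (fun m => (τ m).1) = (fun m => (σ m).1) ∘ p ∧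
      Equiv.Perm.sign p = barSign σ * barSign τ := by
  induction h with
  | rel σ _ hστ =>
    obtain ⟨i, j, hji, rfl⟩ := hστ
    have hij : i ≠ j := fun h => by simp [h] at hji
    refine ⟨Equiv.swap i j, fst_move σ i j, ?_⟩
    change _ = barSign σ * barSign (move σ i j)
    rw [barSign_move σ hij, Equiv.Perm.sign_swap hij, mul_neg, Int.units_mul_self]
  | refl σ => exact ⟨1, rfl, by rw [map_one, Int.units_mul_self]⟩
  | symm σ τ _ ih =>
    obtain ⟨p, hp, hsign⟩ := ih
    refine ⟨p⁻¹, ?_, ?_⟩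
    · rw [hp]
      funext m
      simp
    · rw [map_inv, Int.units_inv_eq_self, hsign, mul_comm]
  | trans σ τ ρ _ _ ihστ ihτρ =>
    obtain ⟨p, hp, hpsign⟩ := ihστ
    obtain ⟨q, hq, hqsign⟩ := ihτρ
    refine ⟨p * q, by rw [hq, hp, Equiv.Perm.coe_mul, Function.comp_assoc], ?_⟩
    rw [map_mul, hpsign, hqsign, mul_assoc, ← mul_assoc (barSign τ), Int.units_mul_self, one_mul]

lemma exists_eqvGen_fst_eq_comp (p : Equiv.Perm (Fin (d + 1))) (σ : Fin (d + 1) → α × Bool) :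
    ∃ τ, Relation.EqvGen (simplexStep d) σ τ ∧
      (fun m => (τ m).1) = (fun m => (σ m).1) ∘ p := by
  have hp : p ∈ Submonoid.closure (Set.range fun k : Fin d => Equiv.swap k.castSucc k.succ) := by
    rw [Equiv.Perm.mclosure_swap_castSucc_succ]
    trivial
  induction hp using Submonoid.closure_induction generalizing σ with
  | mem _ hs =>
    obtain ⟨k, rfl⟩ := hs
    exact ⟨_, .rel _ _ (simplexStep_move σ (by simp)), fst_move σ _ _⟩
  | one => exact ⟨σ, .refl σ, rfl⟩
  | mul p q _ _ ihp ihq =>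
    obtain ⟨τ, hστ, hτ⟩ := ihp σ
    obtain ⟨ρ, hτρ, hρ⟩ := ihq τ
    exact ⟨ρ, hστ.trans _ _ _ hτρ, by rw [hρ, hτ, Equiv.Perm.coe_mul, Function.comp_assoc]⟩

lemma exists_eqvGen_strictMono [LinearOrder α] (σ : Fin (d + 1) → α × Bool)
    (hσ : Function.Injective fun m => (σ m).1) :
    ∃ τ, Relation.EqvGen (simplexStep d) σ τ ∧ StrictMono fun m => (τ m).1 := by
  obtain ⟨τ, hστ, hτ⟩ := exists_eqvGen_fst_eq_comp (Tuple.sort fun m => (σ m).1) σ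
  refine ⟨τ, hστ, ?_⟩
  rw [hτ]
  exact (Tuple.monotone_sort _).strictMono_of_injective (hσ.comp (Equiv.injective _))

lemma exists_eqvGen_unbarred_below (σ : Fin (d + 1) → α × Bool) (k : ℕ) (hk : k ≤ d) :
    ∃ τ, Relation.EqvGen (simplexStep d) σ τ ∧ (fun m => (τ m).1) = (fun m => (σ m).1) ∧
      ∀ m : Fin (d + 1), m.val < k → (τ m).2 = true := by
  induction k with
  | zero => exact ⟨σ, .refl σ, rfl, fun m hm => absurd hm m.val.not_lt_zero⟩
  | succ k ih =>
    obtain ⟨τ, hστ, hfst, hbars⟩ := ih (by omega)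
    let i : Fin (d + 1) := ⟨k, by omega⟩
    let j : Fin (d + 1) := ⟨k + 1, by omega⟩
    have hij : i ≠ j := by simp [i, j, Fin.ext_iff]
    by_cases hi : (τ i).2 = true
    · refine ⟨τ, hστ, hfst, fun m hm => ?_⟩
      rcases Nat.lt_succ_iff_lt_or_eq.mp hm with hm | hm
      · exact hbars m hm
      · rwa [show m = i from Fin.ext hm]
    have hstep (ρ : Fin (d + 1) → α × Bool) := simplexStep_move ρ (i := i) (j := j) rfl
    have hdouble : Relation.EqvGen (simplexStep d) τ (move (move τ i j) i j) :=
      (Relation.EqvGen.rel _ _ (hstep τ)).trans _ _ _ (.rel _ _ (hstep _))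
    refine ⟨move (move τ i j) i j, hστ.trans _ _ _ hdouble, ?_, fun m hm => ?_⟩
    · rw [← hfst]
      funext m
      rw [move_move τ hij]
      split_ifs <;> rfl
    · rw [move_move τ hij]
      rcases Nat.lt_succ_iff_lt_or_eq.mp hm with hm | hm
      · have hmi : m ≠ i := fun h => by simp [h, i] at hm
        have hmj : m ≠ j := fun h => by simp [h, j] at hm
        simpa [hmi, hmj] using hbars m hm
      · simp [show m = i from Fin.ext hm, bar, hi]

lemma eq_of_eqvGen_of_normal [LinearOrder α] {τ τ' : Fin (d + 1) → α × Bool}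
    (h : Relation.EqvGen (simplexStep d) τ τ')
    (hτ : StrictMono fun m => (τ m).1) (hτ' : StrictMono fun m => (τ' m).1)
    (hbars : ∀ m, m ≠ Fin.last d → (τ m).2 = true)
    (hbars' : ∀ m, m ≠ Fin.last d → (τ' m).2 = true) : τ = τ' := by
  obtain ⟨p, hp, hsign⟩ := exists_perm_of_eqvGen h
  have hfst : (fun m => (τ' m).1) = fun m => (τ m).1 :=
    (hτ'.range_inj hτ).mp (by rw [hp, Set.range_comp, p.range_eq_univ, Set.image_univ])
  have hp1 : p = 1 := Equiv.ext fun m => hτ.injective (congrFun (hp.symm.trans hfst) m)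
  rw [hp1, map_one, barSign_of_forall_ne_last hbars, barSign_of_forall_ne_last hbars',
    eq_comm, mul_eq_one_iff_eq_inv, Int.units_inv_eq_self, entrySign_inj] at hsign
  funext m
  refine Prod.ext (congrFun hfst m).symm ?_
  by_cases hm : m = Fin.last d
  · rw [hm, hsign]
  · rw [hbars m hm, hbars' m hm]

end OrientedSimplex

open OrientedSimplex in
/-- every oriented `d`-simplex over a finite totally ordered set (a
`(d+1)`-tuple of signed indices with pairwise distinct underlying elements) is
equivalent, under the equivalence relation generated by the elementary moves, to
exactly one simplex of the form `[e₁,…,e_{d+1}]` or `[e₁,…,e_d, ē_{d+1}]` with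
`e₁ < … < e_{d+1}`, i.e. with strictly increasing underlying elements and all entries
except possibly the last unbarred. -/
theorem simplex_normal_form {α : Type*} [LinearOrder α] (d : ℕ)
    (σ : Fin (d + 1) → α × Bool)
    (hσ : Function.Injective fun i => (σ i).1) :
    ∃! τ : Fin (d + 1) → α × Bool,
      Relation.EqvGen (simplexStep d) σ τ ∧
      StrictMono (fun i => (τ i).1) ∧
      ∀ i : Fin (d + 1), i ≠ Fin.last d → (τ i).2 = true := by
  obtain ⟨τ₀, hστ₀, hτ₀⟩ := exists_eqvGen_strictMono σ hσ
  obtain ⟨τ, hτ₀τ, hfst, hbars⟩ := exists_eqvGen_unbarred_below τ₀ d le_rfl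
  have hστ := hστ₀.trans _ _ _ hτ₀τ
  have hτ : StrictMono fun m => (τ m).1 := hfst ▸ hτ₀
  have hτbars (m : Fin (d + 1)) (hm : m ≠ Fin.last d) := hbars m (Fin.val_lt_last hm)
  refine ⟨τ, ⟨hστ, hτ, hτbars⟩, ?_⟩
  rintro τ' ⟨hστ', hτ', hτ'bars⟩
  exact (eq_of_eqvGen_of_normal ((Relation.EqvGen.symm _ _ hστ).trans _ _ _ hστ')
    hτ hτ' hτbars hτ'bars).symm
end
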